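/- Let T = (S, Σ, κ) be a stochastic transition system whose state space S is countable and equipped with the discrete σ-algebra (a countable Markov chain). If there exists a finite attractor A ⊆ S for T, then T is decisive with respect to every set B ⊆ S. -/

import Mathlib

open MeasureTheory ProbabilityTheory Filter Set ENNReal

namespace STS

variable {S : Type*} [MeasurableSpace S]

/-- The finite-dimensional distributions of the Markov chain with initial distribution `μ`
and transition kernel `κ`: `finDist κ μ n` is the joint law of the first `n+1` states. -/
noncomputable def finDist (κ : Kernel S S) (μ : Measure S) : (n : ℕ) → Measure (Fin (n + 1) → S)
  | 0 => μ.map (fun s => fun _ => s)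
  | n + 1 => (finDist κ μ n).bind (fun x => (κ (x (Fin.last n))).map (Fin.snoc x))

/-- `P` assigns to each initial probability distribution `μ` the probability measure `Prob_μ`
on the space of runs `ℕ → S` (given by the Ionescu–Tulcea theorem), i.e. the unique probability
measure under which the coordinate process is a Markov chain with initial distribution `μ` and
transition kernel `κ`.  This is characterized by the finite-dimensional distributions. -/
def IsMarkovMeasureFamily (κ : Kernel S S) (P : Measure S → Measure (ℕ → S)) : Prop :=
  ∀ μ : Measure S, IsProbabilityMeasure μ →
    IsProbabilityMeasure (P μ) ∧
    ∀ n : ℕ, (P μ).map (fun ω (i : Fin (n + 1)) => ω i.1) = finDist κ μ n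

/-- `F B`: the set of runs that visit `B` at some point. -/
def FEv (B : Set S) : Set (ℕ → S) := {ω | ∃ k, ω k ∈ B}

/-- `F^{≤n} B`: the set of runs that visit `B` within `n` steps. -/
def FLe (n : ℕ) (B : Set S) : Set (ℕ → S) := {ω | ∃ k ≤ n, ω k ∈ B}

/-- `B' U B`: runs that stay in `B'` until a first visit to `B`. -/
def Until (B' B : Set S) : Set (ℕ → S) := {ω | ∃ k, ω k ∈ B ∧ ∀ j < k, ω j ∈ B'}

/-- `B' U^{≤n} B`: runs that stay in `B'` until a first visit to `B`, within `n` steps. -/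
def UntilLe (n : ℕ) (B' B : Set S) : Set (ℕ → S) :=
  {ω | ∃ k ≤ n, ω k ∈ B ∧ ∀ j < k, ω j ∈ B'}

/-- `G B`: runs that always stay in `B`. -/
def Glob (B : Set S) : Set (ℕ → S) := {ω | ∀ k, ω k ∈ B}

/-- `GF B`: runs that visit `B` infinitely often. -/
def GlobFEv (B : Set S) : Set (ℕ → S) := {ω | ∀ n : ℕ, ∃ k ≥ n, ω k ∈ B}

/-- The avoid-set `B̃` of `B`: states from which `B` is reached with probability `0`. -/
def avoidSet (P : Measure S → Measure (ℕ → S)) (B : Set S) : Set S :=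
  {s : S | P (Measure.dirac s) (FEv B) = 0}

/-- The STS is decisive w.r.t. `B`: from any initial distribution, almost surely either `B` or
its avoid-set `B̃` is eventually visited. -/
def Decisive (P : Measure S → Measure (ℕ → S)) (B : Set S) : Prop :=
  ∀ μ : Measure S, IsProbabilityMeasure μ → P μ (FEv B ∪ FEv (avoidSet P B)) = 1

/-- `A` is an attractor: it is reached almost surely from any initial distribution. -/
def IsAttractor (P : Measure S → Measure (ℕ → S)) (A : Set S) : Prop :=
  ∀ μ : Measure S, IsProbabilityMeasure μ → P μ (FEv A) = 1

end STS

/-!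
Since `A` is an attractor, the strong Markov property at the successive visits to `A` shows that
`A` is visited infinitely often almost surely, hence (`A` being finite) so is some `s ∈ A`.
If `s ∉ B̃`, the chain started at `s` returns to `s` before visiting `B` with probability
`ρ < 1`: otherwise it would almost surely keep returning without ever visiting `B`, forcing
`s ∈ B̃`. By the strong Markov property, `s` is visited `m + 1` times before `B` with
probability at most `ρ ^ m`, so almost surely `s` is not visited infinitely often while `B` is avoided.
Hence almost every run visits `B` or `B̃`.
-/

namespace STS

open scoped Topology

variable {S : Type*}

def proj (n : ℕ) (ω : ℕ → S) : Fin (n + 1) → S := fun i => ω i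

def shift (k : ℕ) (ω : ℕ → S) : ℕ → S := fun i => ω (k + i)

def prefixCyl (n : ℕ) (x : ℕ → S) : Set (ℕ → S) := {ω | ∀ i ≤ n, ω i = x i}

def splice (k : ℕ) (x y : ℕ → S) : ℕ → S := fun i => if i ≤ k then x i else y (i - k)

lemma proj_eq_proj_iff {n : ℕ} {ω ω' : ℕ → S} :
    proj n ω = proj n ω' ↔ ∀ i ≤ n, ω i = ω' i := by
  simp only [proj, funext_iff, Fin.forall_iff, Nat.lt_succ_iff]

lemma proj_surjective (n : ℕ) : Function.Surjective (proj (S := S) n) := fun v =>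
  ⟨fun i => v ⟨min i n, by omega⟩, funext fun i => by simp [proj, Nat.le_of_lt_succ i.2]⟩

lemma prefixCyl_eq_preimage (n : ℕ) (x : ℕ → S) :
    prefixCyl n x = proj n ⁻¹' {proj n x} := by
  ext ω
  exact proj_eq_proj_iff.symm

lemma prefixCyl_congr {n : ℕ} {x x' : ℕ → S} (h : ∀ i ≤ n, x i = x' i) :
    prefixCyl n x = prefixCyl n x' := by
  rw [prefixCyl_eq_preimage, prefixCyl_eq_preimage, proj_eq_proj_iff.2 h]

lemma splice_add {k : ℕ} {x y : ℕ → S} (hxy : y 0 = x k) (n : ℕ) :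
    splice k x y (k + n) = y n := by
  rcases Nat.eq_zero_or_pos n with rfl | hn
  · simp [splice, hxy]
  · simp [splice, show ¬ k + n ≤ k by omega]

lemma prefixCyl_inter_shift_preimage {k n : ℕ} {x y : ℕ → S} (hxy : y 0 = x k) :
    prefixCyl k x ∩ shift k ⁻¹' prefixCyl n y = prefixCyl (k + n) (splice k x y) := by
  ext ω
  simp only [prefixCyl, shift, mem_inter_iff, mem_preimage, mem_ofPred_eq]
  constructor
  · rintro ⟨hx, hy⟩ i hi
    by_cases hik : i ≤ k
    · simp [splice, hik, hx i hik]
    · obtain ⟨j, rfl⟩ := Nat.exists_eq_add_of_le (Nat.le_of_not_le hik)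
      rw [splice_add hxy, hy j (by omega)]
  · intro h
    refine ⟨fun i hi => by simpa [splice, hi] using h i (by omega), fun j hj => ?_⟩
    rw [h (k + j) (by omega), splice_add hxy]

/-- A stopping time of the run, possibly infinite, given by the events `{τ = k}`. -/
structure StoppingRule (S : Type*) where
  stopsAt : ℕ → (ℕ → S) → Prop
  congr : ∀ k (ω ω' : ℕ → S), (∀ i ≤ k, ω i = ω' i) → stopsAt k ω → stopsAt k ω'
  unique : ∀ k k' (ω : ℕ → S), stopsAt k ω → stopsAt k' ω → k = k'

namespace StoppingRule

def stopThen (q : StoppingRule S) (E : Set (ℕ → S)) : Set (ℕ → S) :=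
  {ω | ∃ k, q.stopsAt k ω ∧ shift k ω ∈ E}

lemma stopThen_mono (q : StoppingRule S) {E F : Set (ℕ → S)} (h : E ⊆ F) :
    q.stopThen E ⊆ q.stopThen F :=
  fun _ ⟨k, hk, hE⟩ => ⟨k, hk, h hE⟩

lemma setOf_stopsAt_eq_preimage (q : StoppingRule S) (k : ℕ) :
    {ω | q.stopsAt k ω} = proj k ⁻¹' (proj k '' {ω | q.stopsAt k ω}) := by
  refine (subset_preimage_image _ _).antisymm ?_
  rintro ω ⟨ω', hω', hproj⟩
  exact q.congr k ω' ω (proj_eq_proj_iff.1 hproj) hω'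

lemma stopThen_eq_iUnion (q : StoppingRule S) (E : Set (ℕ → S)) :
    q.stopThen E = ⋃ k, {ω | q.stopsAt k ω} ∩ shift k ⁻¹' E := by
  ext ω
  simp [stopThen]

end StoppingRule

lemma exists_count_eq_of_lt_count {p : ℕ → Prop} [DecidablePred p] {m n : ℕ}
    (h : m < Nat.count p n) : ∃ k < n, p k ∧ Nat.count p k = m := by
  have hcard := fun hf => h.trans_le (Nat.count_le_card hf n)
  exact ⟨Nat.nth p m, Nat.nth_lt_of_lt_count h, Nat.nth_mem m hcard, Nat.count_nth hcard⟩

section Visits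

open scoped Classical

/-- `Nat.count` counts the visits to `X` strictly before time `k`, so this stops at the `m`-th
visit to `X` counting from `0`, provided `B` has not been visited up to that time. -/
def visit (X B : Set S) (m : ℕ) : StoppingRule S where
  stopsAt k ω := ω k ∈ X ∧ Nat.count (fun i => ω i ∈ X) k = m ∧ ∀ j ≤ k, ω j ∉ B
  congr k ω ω' h := by
    rintro ⟨hX, hcount, hB⟩
    have hp : ∀ i < k, ω i ∈ X ↔ ω' i ∈ X := fun i hi => by rw [h i hi.le]
    refine ⟨h k le_rfl ▸ hX, ?_, fun j hj => h j hj ▸ hB j hj⟩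
    rw [← hcount]
    exact le_antisymm (Nat.count_mono_left fun i hi => (hp i hi).2)
      (Nat.count_mono_left fun i hi => (hp i hi).1)
  unique k k' ω hk hk' := Nat.count_injective hk.1 hk'.1 (hk.2.1.trans hk'.2.1.symm)

def revisit (X B : Set S) : Set (ℕ → S) :=
  {ω | ∃ j, 0 < j ∧ ω j ∈ X ∧ ∀ i, 0 < i → i ≤ j → ω i ∉ B}

lemma visit_succ_stopThen_univ (X B : Set S) (m : ℕ) :
    (visit X B (m + 1)).stopThen univ = (visit X B m).stopThen (revisit X B) := by
  ext ω
  simp only [StoppingRule.stopThen, visit, revisit, shift, mem_univ, and_true, mem_ofPred_eq]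
  constructor
  · rintro ⟨k', hX', hcount', hB'⟩
    obtain ⟨k, hkk', hX, hcount⟩ :=
      exists_count_eq_of_lt_count (p := fun i => ω i ∈ X) (m := m) (n := k') (by omega)
    refine ⟨k, ⟨hX, hcount, fun j hj => hB' j (by omega)⟩, k' - k, by omega, ?_,
      fun i _ hi => hB' _ (by omega)⟩
    rwa [Nat.add_sub_cancel' hkk'.le]
  · rintro ⟨k, ⟨hX, hcount, hB⟩, j, hj, hXj, hBj⟩
    have hlt : m + 1 < Nat.count (fun i => ω i ∈ X) (k + j + 1) := by
      have := Nat.count_strict_mono (p := fun i => ω i ∈ X) hX (by omega : k < k + j)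
      rw [Nat.count_succ, if_pos hXj]
      omega
    obtain ⟨k', hk', hX', hcount'⟩ := exists_count_eq_of_lt_count hlt
    have hkk' : k < k' := Nat.lt_of_count_lt_count (p := fun i => ω i ∈ X) (by omega)
    refine ⟨k', hX', hcount', fun i hi => ?_⟩
    by_cases hik : i ≤ k
    · exact hB i hik
    · simpa [show k + (i - k) = i by omega] using hBj (i - k) (by omega) (by omega)

lemma mem_visit_zero_stopThen_univ {X B : Set S} {ω : ℕ → S} {k : ℕ} (hX : ω k ∈ X)
    (hB : ∀ j ≤ k, ω j ∉ B) : ω ∈ (visit X B 0).stopThen univ := by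
  obtain ⟨k₀, hk₀, hX₀, hcount₀⟩ :=
    exists_count_eq_of_lt_count (p := fun i => ω i ∈ X) (m := 0) (n := k + 1)
      (by rw [Nat.count_succ, if_pos hX]; omega)
  exact ⟨k₀, ⟨hX₀, hcount₀, fun j hj => hB j (by omega)⟩, trivial⟩

lemma iInter_visit_stopThen_univ (X B : Set S) :
    ⋂ m, (visit X B m).stopThen univ = GlobFEv X ∩ Glob Bᶜ := by
  ext ω
  simp only [mem_iInter, mem_inter_iff, GlobFEv, Glob, mem_ofPred_eq, mem_compl_iff]
  constructor
  · intro h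
    refine ⟨fun n => ?_, fun j => ?_⟩
    · obtain ⟨k, ⟨hX, hcount, -⟩, -⟩ := h n
      exact ⟨k, hcount ▸ Nat.count_le _, hX⟩
    · obtain ⟨k, ⟨-, hcount, hB⟩, -⟩ := h j
      exact hB j (hcount ▸ Nat.count_le _)
  · rintro ⟨hX, hB⟩ m
    have hinf : {i | ω i ∈ X}.Infinite :=
      Nat.frequently_atTop_iff_infinite.1 (frequently_atTop.2 hX)
    exact ⟨Nat.nth _ m, ⟨Nat.nth_mem_of_infinite hinf m, Nat.count_nth_of_infinite hinf m,
      fun j _ => hB j⟩, trivial⟩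

end Visits

lemma compl_fEv (B : Set S) : (FEv B)ᶜ = Glob Bᶜ := by
  ext ω
  simp [FEv, Glob]

lemma mem_fEv_of_mem_globFEv_singleton {Y : Set S} {s : S} {ω : ℕ → S}
    (hω : ω ∈ GlobFEv {s}) (hs : s ∈ Y) : ω ∈ FEv Y :=
  let ⟨k, _, hk⟩ := hω 0
  ⟨k, mem_singleton_iff.1 hk ▸ hs⟩

lemma exists_mem_globFEv_singleton {A : Set S} (hA : A.Finite) {ω : ℕ → S}
    (hω : ω ∈ GlobFEv A) : ∃ s ∈ A, ω ∈ GlobFEv {s} := by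
  by_contra! h
  have hev : ∀ᶠ k in atTop, ∀ s ∈ A, ω k ≠ s := hA.eventually_all.2 fun s hs =>
    not_frequently.1 fun hfreq => h s hs (frequently_atTop.1 hfreq)
  exact (frequently_atTop.2 hω) (hev.mono fun k hk hkA => hk _ hkA rfl)

section Probability

variable [MeasurableSpace S]

lemma measurable_proj (n : ℕ) : Measurable (proj (S := S) n) :=
  measurable_pi_lambda _ fun _ => measurable_pi_apply _

lemma measurable_shift (k : ℕ) : Measurable (shift (S := S) k) :=
  measurable_pi_lambda _ fun _ => measurable_pi_apply _

lemma ext_of_map_proj {ν₁ ν₂ : Measure (ℕ → S)} [IsFiniteMeasure ν₁]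
    (h : ∀ n, ν₁.map (proj n) = ν₂.map (proj n)) : ν₁ = ν₂ := by
  refine ext_of_generate_finite _ generateFrom_measurableCylinders.symm
    isPiSystem_measurableCylinders (fun t ht => ?_) ?_
  · obtain ⟨s, C, hC, rfl⟩ := (mem_measurableCylinders t).1 ht
    have hs : ∀ i ∈ s, i < s.sup id + 1 :=
      fun i hi => Nat.lt_succ_of_le (Finset.le_sup (f := id) hi)
    let r : (Fin (s.sup id + 1) → S) → (s → S) := fun y i => y ⟨i, hs i i.2⟩
    have hr : Measurable r := measurable_pi_lambda _ fun _ => measurable_pi_apply _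
    have hcyl : cylinder s C = proj (s.sup id) ⁻¹' (r ⁻¹' C) := rfl
    rw [hcyl, ← Measure.map_apply (measurable_proj _) (hr hC), h,
      Measure.map_apply (measurable_proj _) (hr hC)]
  · rw [← preimage_univ (f := proj 0), ← Measure.map_apply (measurable_proj 0) .univ, h,
      Measure.map_apply (measurable_proj 0) .univ]

lemma measurableSet_fEv {X : Set S} (hX : MeasurableSet X) : MeasurableSet (FEv X) := by
  have : FEv X = ⋃ k, (fun ω : ℕ → S => ω k) ⁻¹' X := by
    ext ω
    simp [FEv]
  rw [this]
  exact .iUnion fun k => measurable_pi_apply k hX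

lemma measurableSet_globFEv {X : Set S} (hX : MeasurableSet X) : MeasurableSet (GlobFEv X) := by
  have : GlobFEv X = ⋂ n, ⋃ k ≥ n, (fun ω : ℕ → S => ω k) ⁻¹' X := by
    ext ω
    simp [GlobFEv]
  rw [this]
  exact .iInter fun n => .biUnion (to_countable _) fun k _ => measurable_pi_apply k hX

lemma measurableSet_revisit {X B : Set S} (hX : MeasurableSet X) (hB : MeasurableSet B) :
    MeasurableSet (revisit X B) := by
  have : revisit X B = ⋃ j, ⋃ (_ : 0 < j), (fun ω : ℕ → S => ω j) ⁻¹' X ∩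
      ⋂ i, ⋂ (_ : 0 < i), ⋂ (_ : i ≤ j), (fun ω : ℕ → S => ω i) ⁻¹' Bᶜ := by
    ext ω
    simp only [revisit, mem_ofPred_eq, mem_iUnion, mem_inter_iff, mem_preimage, mem_iInter,
      mem_compl_iff, exists_prop]
  rw [this]
  refine .iUnion fun j => .iUnion fun _ => (measurable_pi_apply j hX).inter ?_
  exact .iInter fun i => .iInter fun _ => .iInter fun _ => measurable_pi_apply i hB.compl

variable [Countable S] [DiscreteMeasurableSpace S]
variable {κ : Kernel S S} {P : Measure S → Measure (ℕ → S)}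
variable (μ : Measure S) [IsProbabilityMeasure μ]

lemma measurableSet_prefixCyl (n : ℕ) (x : ℕ → S) : MeasurableSet (prefixCyl n x) := by
  rw [prefixCyl_eq_preimage]
  exact measurable_proj n (.singleton _)

lemma ext_of_prefixCyl {ν₁ ν₂ : Measure (ℕ → S)} [IsFiniteMeasure ν₁]
    (h : ∀ n x, ν₁ (prefixCyl n x) = ν₂ (prefixCyl n x)) : ν₁ = ν₂ := by
  refine ext_of_map_proj fun n => Measure.ext_iff_singleton.2 fun v => ?_
  obtain ⟨x, rfl⟩ := proj_surjective n v
  rw [Measure.map_apply (measurable_proj n) (.singleton _),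
    Measure.map_apply (measurable_proj n) (.singleton _), ← prefixCyl_eq_preimage, h]

lemma measure_preimage_proj (hP : IsMarkovMeasureFamily κ P) (n : ℕ)
    (C : Set (Fin (n + 1) → S)) : P μ (proj n ⁻¹' C) = finDist κ μ n C := by
  rw [← (hP μ ‹_›).2 n]
  exact (Measure.map_apply (measurable_proj n) .of_discrete).symm

lemma measure_prefixCyl_zero (hP : IsMarkovMeasureFamily κ P) (x : ℕ → S) :
    P μ (prefixCyl 0 x) = μ {x 0} := by
  rw [prefixCyl_eq_preimage, measure_preimage_proj μ hP, finDist,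
    Measure.map_apply (measurable_of_countable _) .of_discrete]
  congr 1
  ext s
  simp [proj, funext_iff]

lemma measure_prefixCyl_succ (hP : IsMarkovMeasureFamily κ P) (n : ℕ) (x : ℕ → S) :
    P μ (prefixCyl (n + 1) x) = P μ (prefixCyl n x) * κ (x n) {x (n + 1)} := by
  have hx : proj (n + 1) x = Fin.snoc (proj n x) (x (n + 1)) :=
    (Fin.snoc_init_self (proj (n + 1) x)).symm
  have hstep : ∀ y, (κ (y (Fin.last n))).map (Fin.snoc y) {proj (n + 1) x}
      = ({proj n x} : Set _).indicator (fun _ => κ (x n) {x (n + 1)}) y := by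
    intro y
    rw [Measure.map_apply (measurable_of_countable _) .of_discrete, hx]
    by_cases hy : y = proj n x
    · subst hy
      have : Fin.snoc (α := fun _ => S) (proj n x) ⁻¹' {Fin.snoc (proj n x) (x (n + 1))}
          = {x (n + 1)} := by
        ext u
        simp [Fin.snoc_injective2.eq_iff]
      rw [this, indicator_of_mem (mem_singleton _)]
      rfl
    · have : Fin.snoc (α := fun _ => S) y ⁻¹' {Fin.snoc (proj n x) (x (n + 1))} = ∅ := by
        ext u
        simp [Fin.snoc_injective2.eq_iff, hy]
      rw [this, indicator_of_notMem (mt mem_singleton_iff.1 hy), measure_empty]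
  rw [prefixCyl_eq_preimage, measure_preimage_proj μ hP, finDist,
    Measure.bind_apply .of_discrete (measurable_of_countable _).aemeasurable]
  simp_rw [hstep]
  rw [lintegral_indicator_const .of_discrete, ← measure_preimage_proj μ hP,
    ← prefixCyl_eq_preimage, mul_comm]

lemma measure_dirac_prefixCyl_of_ne (hP : IsMarkovMeasureFamily κ P) {t : S} {y : ℕ → S}
    (hy : y 0 ≠ t) (n : ℕ) : P (.dirac t) (prefixCyl n y) = 0 := by
  have hsub : prefixCyl n y ⊆ prefixCyl 0 y := fun ω hω i hi => hω i (by omega)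
  refine measure_mono_null hsub ?_
  rw [measure_prefixCyl_zero _ hP, Measure.dirac_apply' _ .of_discrete]
  simp [hy.symm]

lemma measure_prefixCyl_splice (hP : IsMarkovMeasureFamily κ P) {k : ℕ} {x y : ℕ → S}
    (hxy : y 0 = x k) (n : ℕ) :
    P μ (prefixCyl (k + n) (splice k x y))
      = P μ (prefixCyl k x) * P (.dirac (x k)) (prefixCyl n y) := by
  induction n with
  | zero =>
    rw [measure_prefixCyl_zero _ hP, hxy, Measure.dirac_apply_of_mem (mem_singleton _), mul_one,
      Nat.add_zero]
    exact congrArg _ (prefixCyl_congr fun i hi => by simp [splice, hi])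
  | succ n ih =>
    rw [← Nat.add_assoc, measure_prefixCyl_succ _ hP, ih, measure_prefixCyl_succ _ hP,
      Nat.add_assoc, splice_add hxy, splice_add hxy, mul_assoc]

lemma measure_prefixCyl_inter_shift_prefixCyl (hP : IsMarkovMeasureFamily κ P) (k n : ℕ)
    (x y : ℕ → S) :
    P μ (prefixCyl k x ∩ shift k ⁻¹' prefixCyl n y)
      = P μ (prefixCyl k x) * P (.dirac (x k)) (prefixCyl n y) := by
  by_cases hxy : y 0 = x k
  · rw [prefixCyl_inter_shift_preimage hxy, measure_prefixCyl_splice _ hP hxy]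
  · have hempty : prefixCyl k x ∩ shift k ⁻¹' prefixCyl n y = ∅ := by
      refine eq_empty_of_forall_notMem fun ω ⟨hx, hy⟩ => hxy ?_
      rw [← hx k le_rfl, ← hy 0 (Nat.zero_le n)]
      rfl
    rw [hempty, measure_empty, measure_dirac_prefixCyl_of_ne hP hxy, mul_zero]

lemma measure_prefixCyl_inter_shift (hP : IsMarkovMeasureFamily κ P) (k : ℕ) (x : ℕ → S)
    {E : Set (ℕ → S)} (hE : MeasurableSet E) :
    P μ (prefixCyl k x ∩ shift k ⁻¹' E) = P μ (prefixCyl k x) * P (.dirac (x k)) E := by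
  have := (hP μ ‹_›).1
  have hext : ((P μ).restrict (prefixCyl k x)).map (shift k)
      = P μ (prefixCyl k x) • P (.dirac (x k)) := by
    refine ext_of_prefixCyl fun n y => ?_
    rw [Measure.map_apply (measurable_shift k) (measurableSet_prefixCyl n y),
      Measure.restrict_apply (measurable_shift k (measurableSet_prefixCyl n y)), inter_comm,
      measure_prefixCyl_inter_shift_prefixCyl _ hP, Measure.smul_apply, smul_eq_mul]
  rw [inter_comm, ← Measure.restrict_apply (measurable_shift k hE),
    ← Measure.map_apply (measurable_shift k) hE, hext, Measure.smul_apply, smul_eq_mul]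

lemma measure_preimage_proj_inter_shift (hP : IsMarkovMeasureFamily κ P) {k : ℕ}
    {C : Set (Fin (k + 1) → S)} {E : Set (ℕ → S)} (hE : MeasurableSet E) {c : ℝ≥0∞}
    (hc : ∀ ω, proj k ω ∈ C → P (.dirac (ω k)) E = c) :
    P μ (proj k ⁻¹' C ∩ shift k ⁻¹' E) = c * P μ (proj k ⁻¹' C) := by
  have hsingleton : ∀ v ∈ C, (P μ).restrict (shift k ⁻¹' E) (proj k ⁻¹' {v})
      = c * P μ (proj k ⁻¹' {v}) := by
    intro v hv
    obtain ⟨x, rfl⟩ := proj_surjective k v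
    rw [Measure.restrict_apply' (measurable_shift k hE), ← prefixCyl_eq_preimage,
      measure_prefixCyl_inter_shift _ hP k x hE, hc x hv, mul_comm]
  have hmeas : ∀ v ∈ C, MeasurableSet (proj k ⁻¹' {v}) :=
    fun _ _ => measurable_proj k (.singleton _)
  rw [← Measure.restrict_apply' (measurable_shift k hE),
    ← tsum_measure_preimage_singleton C.to_countable hmeas,
    ← tsum_measure_preimage_singleton C.to_countable hmeas, ← ENNReal.tsum_mul_left]
  exact tsum_congr fun v => hsingleton v v.2

lemma measure_shift_preimage (hP : IsMarkovMeasureFamily κ P) (k : ℕ) {E : Set (ℕ → S)}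
    (hE : MeasurableSet E) {c : ℝ≥0∞} (hc : ∀ t, P (.dirac t) E = c) :
    P μ (shift k ⁻¹' E) = c := by
  have := (hP μ ‹_›).1
  simpa using measure_preimage_proj_inter_shift μ hP (C := univ) hE fun ω _ => hc (ω k)

namespace StoppingRule

lemma measurableSet_stopThen (q : StoppingRule S) {E : Set (ℕ → S)} (hE : MeasurableSet E) :
    MeasurableSet (q.stopThen E) := by
  rw [stopThen_eq_iUnion]
  refine .iUnion fun k => ?_
  rw [setOf_stopsAt_eq_preimage]
  exact (measurable_proj k .of_discrete).inter (measurable_shift k hE)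

/-- The strong Markov property at the stopping rule `q`. -/
lemma measure_stopThen (hP : IsMarkovMeasureFamily κ P) (q : StoppingRule S)
    {E : Set (ℕ → S)} (hE : MeasurableSet E) {c : ℝ≥0∞}
    (hc : ∀ k ω, q.stopsAt k ω → P (.dirac (ω k)) E = c) :
    P μ (q.stopThen E) = c * P μ (q.stopThen univ) := by
  have hdisj : ∀ F : Set (ℕ → S),
      Pairwise (Function.onFun Disjoint fun k => {ω | q.stopsAt k ω} ∩ shift k ⁻¹' F) :=
    fun F k k' hkk' => disjoint_left.2 fun ω hk hk' => hkk' (q.unique k k' ω hk.1 hk'.1)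
  have hmeas : ∀ k, MeasurableSet {ω | q.stopsAt k ω} := fun k => by
    rw [setOf_stopsAt_eq_preimage]
    exact measurable_proj k .of_discrete
  have hk : ∀ k, P μ ({ω | q.stopsAt k ω} ∩ shift k ⁻¹' E)
      = c * P μ ({ω | q.stopsAt k ω} ∩ shift k ⁻¹' univ) := by
    intro k
    rw [preimage_univ, inter_univ, setOf_stopsAt_eq_preimage]
    refine measure_preimage_proj_inter_shift μ hP hE fun ω hω => hc k ω ?_
    rwa [← mem_preimage, ← setOf_stopsAt_eq_preimage] at hω
  rw [stopThen_eq_iUnion, stopThen_eq_iUnion,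
    measure_iUnion (hdisj E) fun k => (hmeas k).inter (measurable_shift k hE),
    measure_iUnion (hdisj univ) fun k => (hmeas k).inter (measurable_shift k .univ),
    ← ENNReal.tsum_mul_left]
  exact tsum_congr hk

end StoppingRule

lemma measure_visit_stopThen_univ (hP : IsMarkovMeasureFamily κ P) {X B : Set S} {ρ : ℝ≥0∞}
    (hρ : ∀ t ∈ X, P (.dirac t) (revisit X B) = ρ) (m : ℕ) :
    P μ ((visit X B m).stopThen univ) = ρ ^ m * P μ ((visit X B 0).stopThen univ) := by
  induction m with
  | zero => rw [pow_zero, one_mul]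
  | succ m ih =>
    rw [visit_succ_stopThen_univ, StoppingRule.measure_stopThen μ hP (visit X B m)
      (measurableSet_revisit .of_discrete .of_discrete) fun k ω hk => hρ _ hk.1, ih, pow_succ,
      mul_comm _ ρ, mul_assoc]

lemma tendsto_measure_globFEv_inter_glob (hP : IsMarkovMeasureFamily κ P) {X B : Set S}
    {ρ : ℝ≥0∞} (hρ : ∀ t ∈ X, P (.dirac t) (revisit X B) = ρ) :
    Tendsto (fun m => ρ ^ m * P μ ((visit X B 0).stopThen univ)) atTop
      (𝓝 (P μ (GlobFEv X ∩ Glob Bᶜ))) := by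
  have := (hP μ ‹_›).1
  simp_rw [← measure_visit_stopThen_univ μ hP hρ, ← iInter_visit_stopThen_univ]
  refine tendsto_measure_iInter_atTop
    (fun m => (StoppingRule.measurableSet_stopThen _ .univ).nullMeasurableSet)
    (antitone_nat_of_succ_le fun m => ?_) ⟨0, measure_ne_top _ _⟩
  rw [visit_succ_stopThen_univ]
  exact StoppingRule.stopThen_mono _ (subset_univ _)

lemma ae_mem_globFEv_of_isAttractor (hP : IsMarkovMeasureFamily κ P) {A : Set S}
    (hattr : IsAttractor P A) : ∀ᵐ ω ∂P μ, ω ∈ GlobFEv A := by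
  have := (hP μ ‹_›).1
  have hrevisit : ∀ t ∈ A, P (.dirac t) (revisit A ∅) = 1 := by
    intro t _
    have := (hP (.dirac t) inferInstance).1
    refine le_antisymm prob_le_one ?_
    calc 1 = P (.dirac t) (shift 1 ⁻¹' FEv A) := (measure_shift_preimage _ hP 1
          (measurableSet_fEv .of_discrete) fun _ => hattr _ inferInstance).symm
      _ ≤ P (.dirac t) (revisit A ∅) :=
          measure_mono fun ω ⟨j, hj⟩ => ⟨1 + j, by omega, hj, fun _ _ _ => notMem_empty _⟩
  have hfirst : P μ ((visit A ∅ 0).stopThen univ) = 1 :=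
    le_antisymm prob_le_one <| (hattr μ ‹_›).symm.le.trans <|
      measure_mono fun ω ⟨k, hk⟩ => mem_visit_zero_stopThen_univ hk fun _ _ => notMem_empty _
  have hlim := tendsto_measure_globFEv_inter_glob μ hP hrevisit
  have hglob : Glob (∅ᶜ : Set S) = univ := by
    ext ω
    simp [Glob]
  simp only [one_pow, one_mul, hfirst, hglob, inter_univ] at hlim
  rw [ae_mem_iff_measure_eq (measurableSet_globFEv .of_discrete).nullMeasurableSet, measure_univ]
  exact tendsto_nhds_unique tendsto_const_nhds hlim |>.symm

lemma measure_revisit_lt_one (hP : IsMarkovMeasureFamily κ P) {B : Set S} {s : S}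
    (hsB : s ∉ B) (hs : s ∉ avoidSet P B) : P (.dirac s) (revisit {s} B) < 1 := by
  have := (hP (.dirac s) inferInstance).1
  refine lt_of_le_of_ne prob_le_one fun hρ => hs ?_
  have hfirst : P (.dirac s) ((visit {s} B 0).stopThen univ) = 1 := by
    refine le_antisymm prob_le_one ?_
    calc 1 = P (.dirac s) (prefixCyl 0 fun _ => s) := by
          rw [measure_prefixCyl_zero _ hP, Measure.dirac_apply_of_mem (mem_singleton _)]
      _ ≤ _ := measure_mono fun ω hω => mem_visit_zero_stopThen_univ (k := 0)
          (hω 0 le_rfl) fun j hj => by rw [Nat.le_zero.1 hj, hω 0 le_rfl]; exact hsB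
  have hlim := tendsto_measure_globFEv_inter_glob (.dirac s) hP (X := {s}) (B := B) (ρ := 1)
    (by rintro t rfl; exact hρ)
  simp only [one_pow, one_mul, hfirst] at hlim
  have hglob : P (.dirac s) (GlobFEv {s} ∩ Glob Bᶜ) = 1 :=
    tendsto_nhds_unique tendsto_const_nhds hlim |>.symm
  show P (.dirac s) (FEv B) = 0
  rw [← prob_compl_eq_one_iff (measurableSet_fEv .of_discrete), compl_fEv]
  exact le_antisymm prob_le_one (hglob ▸ measure_mono inter_subset_right)

lemma ae_mem_globFEv_singleton_imp_mem_fEv (hP : IsMarkovMeasureFamily κ P) {B : Set S} {s : S}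
    (hs : s ∉ avoidSet P B) : ∀ᵐ ω ∂P μ, ω ∈ GlobFEv {s} → ω ∈ FEv B := by
  have := (hP μ ‹_›).1
  by_cases hsB : s ∈ B
  · exact ae_of_all _ fun ω hω => mem_fEv_of_mem_globFEv_singleton hω hsB
  have hρ : ∀ t ∈ ({s} : Set S),
      P (.dirac t) (revisit {s} B) = P (.dirac s) (revisit {s} B) := by
    rintro t rfl
    rfl
  have hnull : P μ (GlobFEv {s} ∩ Glob Bᶜ) = 0 := by
    refine tendsto_nhds_unique (tendsto_measure_globFEv_inter_glob μ hP hρ) ?_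
    simpa using ENNReal.Tendsto.mul_const (ENNReal.tendsto_pow_atTop_nhds_zero_of_lt_one
      (measure_revisit_lt_one hP hsB hs)) (Or.inr (measure_ne_top (P μ) _))
  refine ae_iff.2 (measure_mono_null (fun ω hω => ?_) hnull)
  simp only [mem_ofPred_eq, Classical.not_imp] at hω
  exact ⟨hω.1, compl_fEv B ▸ hω.2⟩

end Probability

theorem decisive_of_finite_attractor_general
    {S : Type*} [Countable S] [MeasurableSpace S] [DiscreteMeasurableSpace S]
    (κ : Kernel S S)
    (P : Measure S → Measure (ℕ → S)) (hP : IsMarkovMeasureFamily κ P)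
    (A : Set S) (hAfin : A.Finite) (hattr : IsAttractor P A) :
    ∀ B : Set S, Decisive P B := by
  intro B μ hμ
  have := (hP μ hμ).1
  have hs : ∀ s ∈ A,
      ∀ᵐ ω ∂P μ, ω ∈ GlobFEv {s} → ω ∈ FEv B ∪ FEv (avoidSet P B) := by
    intro s _
    by_cases hsB : s ∈ avoidSet P B
    · exact ae_of_all _ fun ω hω => Or.inr (mem_fEv_of_mem_globFEv_singleton hω hsB)
    · exact (ae_mem_globFEv_singleton_imp_mem_fEv μ hP hsB).mono fun ω h hω => Or.inl (h hω)
  have hae : ∀ᵐ ω ∂P μ, ω ∈ FEv B ∪ FEv (avoidSet P B) := by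
    filter_upwards [ae_mem_globFEv_of_isAttractor μ hP hattr,
      (ae_ball_iff hAfin.countable).2 hs] with ω hωA hω
    obtain ⟨s, hsA, hωs⟩ := exists_mem_globFEv_singleton hAfin hωA
    exact hω s hsA hωs
  have hmeas : MeasurableSet (FEv B ∪ FEv (avoidSet P B)) :=
    (measurableSet_fEv .of_discrete).union (measurableSet_fEv .of_discrete)
  rwa [ae_mem_iff_measure_eq hmeas.nullMeasurableSet, measure_univ] at hae

/-- A countable Markov chain (countable state space with the discrete
σ-algebra) that has a finite attractor is decisive w.r.t. every set of states. -/
theorem decisive_of_finite_attractor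
    {S : Type*} [Countable S] [MeasurableSpace S] [DiscreteMeasurableSpace S]
    (κ : Kernel S S) [IsMarkovKernel κ]
    (P : Measure S → Measure (ℕ → S)) (hP : IsMarkovMeasureFamily κ P)
    (A : Set S) (hAfin : A.Finite) (hattr : IsAttractor P A) :
    ∀ B : Set S, Decisive P B :=
  decisive_of_finite_attractor_general κ P hP A hAfin hattr

end STS
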